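/- arXiv:2201.02687 — 2 statements merged into one kernel-verified Lean document; each statement's English description precedes it below -/
import Mathlib

section
/- With V the eigenvector matrix defined by V_{1k} = (μ_k − 1)/τ, V_{jk} = μ_k^j − μ_k (2 ≤ j ≤ n+1), where μ₁, …, μ_{n+1} are the roots of c + μ + ⋯ + μ^{n+1} = 0 with c > 1 and τ = T/n for fixed T > 0, the matrix 1-norm satisfies ‖V‖₁ ≤ (2c/T)n + (4c−2)n, i.e., ‖V‖₁ = O(cn). -/
/-!
Multiplying `c + μ + ⋯ + μ^(n+1) = 0` by `μ - 1` gives `μ^(n+2) = c - (c - 1) μ`. If `|μ| > 1` this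
yields `|μ|^(n+2) ≤ c + (c - 1)|μ| < (2c - 1)|μ|`, so `|μ|^j < 2c - 1` for all `j ≤ n + 1` (trivially so
when `|μ| ≤ 1`). Hence the top entry of a column of `V` is at most `2c/τ = 2cn/T` and each of the `n`
others, `|μ^j - μ| ≤ |μ|^j + |μ|`, is below `2(2c - 1)`.
-/

theorem pow_succ_eq_of_add_geom_sum_eq_zero {R : Type*} [CommRing R] {c z : R} {m : ℕ}
    (h : c + ∑ l ∈ Finset.range m, z ^ (l + 1) = 0) : z ^ (m + 1) = c - (c - 1) * z := by
  have hmul : z * ∑ l ∈ Finset.range m, z ^ l = -c := by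
    simp only [Finset.mul_sum, ← pow_succ']
    linear_combination h
  linear_combination (z - 1) * hmul - z * geom_sum_mul z m

theorem norm_pow_lt_of_pow_succ_eq {c : ℝ} (hc : 1 < c) {z : ℂ} {m : ℕ}
    (h : z ^ (m + 1) = c - (c - 1) * z) : ‖z‖ ^ m < 2 * c - 1 := by
  set r := ‖z‖
  rcases le_or_gt r 1 with hr | hr
  · have : r ^ m ≤ 1 := pow_le_one₀ (norm_nonneg z) hr
    linarith
  · have hbound : r ^ m * r ≤ c + (c - 1) * r := by
      calc r ^ m * r = ‖(c : ℂ) - ((c - 1 : ℝ) : ℂ) * z‖ := by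
            rw [← pow_succ, ← norm_pow, h]; push_cast; rfl
        _ ≤ ‖(c : ℂ)‖ + ‖((c - 1 : ℝ) : ℂ) * z‖ := norm_sub_le _ _
        _ = c + (c - 1) * r := by
            rw [norm_mul, Complex.norm_real, Complex.norm_real, Real.norm_of_nonneg (by linarith),
              Real.norm_of_nonneg (by linarith)]
    have : r ^ m * r < (2 * c - 1) * r := by nlinarith
    exact lt_of_mul_lt_mul_right this (norm_nonneg z)

theorem norm_pow_lt_of_add_geom_sum_eq_zero {c : ℝ} (hc : 1 < c) {z : ℂ} {m : ℕ}
    (h : (c : ℂ) + ∑ l ∈ Finset.range m, z ^ (l + 1) = 0) {j : ℕ} (hj : j ≤ m) :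
    ‖z‖ ^ j < 2 * c - 1 := by
  have hm := norm_pow_lt_of_pow_succ_eq hc (pow_succ_eq_of_add_geom_sum_eq_zero h)
  rcases le_or_gt ‖z‖ 1 with hr | hr
  · have : ‖z‖ ^ j ≤ 1 := pow_le_one₀ (norm_nonneg z) hr
    linarith
  · exact (pow_le_pow_right₀ hr.le hj).trans_lt hm

theorem stmt8_general (n : ℕ) (c T : ℝ) (hc : 1 < c) (hT : 0 < T)
    (μ : Fin (n + 1) → ℂ)
    (hroot : ∀ k, (c : ℂ) + ∑ l ∈ Finset.range (n + 1), μ k ^ (l + 1) = 0)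
    (V : Matrix (Fin (n + 1)) (Fin (n + 1)) ℂ)
    (hV : ∀ i k, V i k =
      if (i : ℕ) = 0 then (μ k - 1) / ((T / n : ℝ) : ℂ) else μ k ^ ((i : ℕ) + 1) - μ k) :
    ∀ k : Fin (n + 1),
      ∑ j, ‖V j k‖ ≤ (2 * c / T) * n + (4 * c - 2) * n := by
  intro k
  have hμ {j : ℕ} (hj : j ≤ n + 1) : ‖μ k‖ ^ j < 2 * c - 1 :=
    norm_pow_lt_of_add_geom_sum_eq_zero hc (hroot k) hj
  have h₁ : ‖μ k‖ < 2 * c - 1 := by simpa using hμ (j := 1) (by omega)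
  have hfirst : ‖V 0 k‖ ≤ 2 * c / T * n := by
    rw [hV, if_pos (Fin.val_zero (n + 1)), norm_div, Complex.norm_real,
      Real.norm_of_nonneg (by positivity), div_div_eq_mul_div, mul_div_right_comm]
    gcongr
    linarith [norm_sub_le (μ k) 1, norm_one (α := ℂ)]
  have hrest (i : Fin n) : ‖V i.succ k‖ ≤ 4 * c - 2 := by
    rw [hV, Fin.val_succ, if_neg (Nat.succ_ne_zero _)]
    have hpow := hμ (j := (i : ℕ) + 1 + 1) (by omega)
    calc ‖μ k ^ ((i : ℕ) + 1 + 1) - μ k‖ ≤ ‖μ k‖ ^ ((i : ℕ) + 1 + 1) + ‖μ k‖ := by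
          simpa only [norm_pow] using norm_sub_le (μ k ^ ((i : ℕ) + 1 + 1)) (μ k)
      _ ≤ 4 * c - 2 := by linarith
  calc ∑ j, ‖V j k‖ = ‖V 0 k‖ + ∑ i : Fin n, ‖V i.succ k‖ := Fin.sum_univ_succ _
    _ ≤ 2 * c / T * n + ∑ _i : Fin n, (4 * c - 2) := by gcongr with i; exact hrest i
    _ = 2 * c / T * n + (4 * c - 2) * n := by
        rw [Finset.sum_const, Finset.card_univ, Fintype.card_fin, nsmul_eq_mul, mul_comm (n : ℝ)]

/-- The eigenvector matrix `V` (with `V_{1k} = (μ_k − 1)/τ`, `V_{jk} = μ_k^j − μ_k`,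
`τ = T/n`) built from the roots of `c + μ + ⋯ + μ^{n+1} = 0` with `c > 1` satisfies
`‖V‖₁ ≤ (2c/T)n + (4c−2)n`, i.e. every absolute column sum is at most that bound. -/
theorem stmt8 (n : ℕ) (hn : 1 ≤ n) (c T : ℝ) (hc : 1 < c) (hT : 0 < T)
    (μ : Fin (n + 1) → ℂ) (hinj : Function.Injective μ)
    (hroot : ∀ k, (c : ℂ) + ∑ l ∈ Finset.range (n + 1), μ k ^ (l + 1) = 0)
    (V : Matrix (Fin (n + 1)) (Fin (n + 1)) ℂ)
    (hV : ∀ i k, V i k =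
      if (i : ℕ) = 0 then (μ k - 1) / ((T / n : ℝ) : ℂ) else μ k ^ ((i : ℕ) + 1) - μ k) :
    ∀ k : Fin (n + 1),
      ∑ j, ‖V j k‖ ≤ (2 * c / T) * n + (4 * c - 2) * n :=
  stmt8_general n c T hc hT μ hroot V hV
end

section
/- Let B have eigenvalue λ with eigenvector v = (v₀, …, v_n)ᵀ normalized by v₀ = 1/τ, where α = 1/τ + τ/β. Then v_k = (μ^{k+1} − μ)/(μ − 1) for k = 1, …, n, where μ = 1/(1 − τλ). -/
/-!
Put `w := v` with `w₀ := 0`. Since `τ v₀ = 1`, rows `1, …, n` of `B v = λ v` say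
`w_k (1 − τλ) = 1 + w_{k−1}`, i.e. `w_k = μ (1 + w_{k−1})` with `w₀ = 0`, so
`w_k = μ + μ² + ⋯ + μ^k = (μ^{k+1} − μ)/(μ − 1)`.
-/

/-- The time-discretization matrix `B` of the parameterized quasi-boundary value method:
first row `(α, 0, …, 0, 1/β)`, first column entries `−1` from row 2 on, diagonal `1/τ`
from row 2 on, subdiagonal `−1/τ` from row 3 on. -/
noncomputable def Bmat (n : ℕ) (α τ β : ℝ) : Matrix (Fin (n + 1)) (Fin (n + 1)) ℝ :=
  fun i j =>
    if (i : ℕ) = 0 then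
      (if (j : ℕ) = 0 then α else if (j : ℕ) = n then 1 / β else 0)
    else if (j : ℕ) = 0 then -1
    else if j = i then 1 / τ
    else if (j : ℕ) + 1 = (i : ℕ) then -1 / τ
    else 0

theorem eq_geom_of_succ_mul_eq_one_add {K : Type*} [Field K] {n : ℕ} {s : Fin (n + 1) → K}
    {c : K} (hc : c⁻¹ ≠ 1) (h0 : s 0 = 0) (hs : ∀ i : Fin n, s i.succ * c = 1 + s i.castSucc)
    (i : Fin (n + 1)) : s i = (c⁻¹ ^ ((i : ℕ) + 1) - c⁻¹) / (c⁻¹ - 1) := by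
  have hc1 : c⁻¹ - 1 ≠ 0 := sub_ne_zero.mpr hc
  induction i using Fin.induction with
  | zero => simp [h0]
  | succ i ih =>
    rcases eq_or_ne c 0 with rfl | hc0
    · simpa [ih] using hs i
    · have hsucc : s i.succ = c⁻¹ * (1 + s i.castSucc) := by
        rw [← hs i]; field_simp
      rw [hsucc, ih, Fin.val_succ, Fin.val_castSucc]
      generalize c⁻¹ = μ at hc1 ⊢
      field_simp
      ring

theorem Bmat_map_mulVec_succ (n : ℕ) (α τ β : ℝ) (v : Fin (n + 1) → ℂ) (i : Fin n) :
    ((Bmat n α τ β).map Complex.ofReal).mulVec v i.succ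
      = -v 0 + (v i.succ - Function.update v 0 0 i.castSucc) / τ := by
  have hrow : ∀ j, (Bmat n α τ β).map Complex.ofReal i.succ j * v j
      = -(if j = 0 then v j else 0) + (if j = i.succ then v j else 0) / τ
        - (if j = i.castSucc then Function.update v 0 0 j else 0) / τ := by
    intro j
    simp only [Matrix.map_apply, Bmat, Function.update_apply, Fin.ext_iff, Fin.val_succ,
      Fin.val_castSucc, Fin.val_zero, Nat.add_one_ne_zero, if_false]
    split_ifs <;> first | omega | (push_cast; ring)
  simp only [Matrix.mulVec, dotProduct, hrow, Finset.sum_add_distrib, Finset.sum_sub_distrib,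
    Finset.sum_neg_distrib, ← Finset.sum_div, Finset.sum_ite_eq', Finset.mem_univ, if_true]
  ring

theorem stmt13_general (n : ℕ) (τ β : ℝ)
    (lam : ℂ) (v : Fin (n + 1) → ℂ)
    (hv : ((Bmat n (1 / τ + τ / β) τ β).map (Complex.ofReal)).mulVec v = lam • v)
    (hv0 : v 0 = 1 / (τ : ℂ))
    (μ : ℂ) (hμdef : μ = 1 / (1 - (τ : ℂ) * lam)) (hμ : μ ≠ 1) :
    ∀ k : Fin (n + 1), (k : ℕ) ≠ 0 →
      v k = (μ ^ ((k : ℕ) + 1) - μ) / (μ - 1) := by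
  have hτ : (τ : ℂ) ≠ 0 := by
    rintro hτ
    simp [hμdef, hτ] at hμ
  have hrec : ∀ i : Fin n, Function.update v 0 0 i.succ * (1 - τ * lam)
      = 1 + Function.update v 0 0 i.castSucc := by
    intro i
    have hrow := congrFun hv i.succ
    rw [Bmat_map_mulVec_succ, hv0, Pi.smul_apply, smul_eq_mul] at hrow
    rw [Function.update_of_ne (Fin.succ_ne_zero i)]
    field_simp at hrow
    linear_combination hrow
  rw [hμdef, one_div] at hμ ⊢
  intro k hk
  rw [← eq_geom_of_succ_mul_eq_one_add hμ (Function.update_self 0 0 v) hrec k,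
    Function.update_of_ne (Fin.ne_of_val_ne hk)]

/-- If `B v = λ v` with `v₀ = 1/τ` and `μ = 1/(1 − τλ)`, then
`v_k = (μ^{k+1} − μ)/(μ − 1)` for `k = 1, …, n`. -/
theorem stmt13 (n : ℕ) (hn : 1 ≤ n) (τ β : ℝ) (hτ : 0 < τ) (hβ : 0 < β)
    (lam : ℂ) (v : Fin (n + 1) → ℂ)
    (hv : ((Bmat n (1 / τ + τ / β) τ β).map (Complex.ofReal)).mulVec v = lam • v)
    (hv0 : v 0 = 1 / (τ : ℂ))
    (μ : ℂ) (hμdef : μ = 1 / (1 - (τ : ℂ) * lam)) (hμ : μ ≠ 1) :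
    ∀ k : Fin (n + 1), (k : ℕ) ≠ 0 →
      v k = (μ ^ ((k : ℕ) + 1) - μ) / (μ - 1) :=
  stmt13_general n τ β lam v hv hv0 μ hμdef hμ
end
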